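/- There is a universal constant C > 0 such that for every Y as in the context, every s ∈ ℝ and every τ ∈ [−π,π]: |B(s,s+τ)| ≤ C τ² Q R, where B(s,s+τ) = Y'(s+τ)·(Y(s+τ) − Y(s))^⊥, Q = ‖Y'‖_{L^∞(𝕋)}, and R = R(s,τ) = ℳY''(s+τ) + |Y''(s+τ)|. -/

import Mathlib

open MeasureTheory Real Filter Topology
open scoped RealInnerProductSpace ENNReal

noncomputable section

abbrev E2 : Type := EuclideanSpace ℝ (Fin 2)

/-- Counterclockwise rotation by `π/2`: `(v₁, v₂)^⊥ = (−v₂, v₁)`. -/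
def perp (v : E2) : E2 := (WithLp.equiv 2 (Fin 2 → ℝ)).symm ![-(v 1), v 0]

/-- The centered Hardy–Littlewood maximal function, valued in `ℝ≥0∞`. -/
def maxFn (g : ℝ → E2) (x : ℝ) : ℝ≥0∞ :=
  ⨆ (r : ℝ) (_ : 0 < r),
    (ENNReal.ofReal (2 * r))⁻¹ * ∫⁻ y in Set.Ioc (x - r) (x + r), (‖g y‖₊ : ℝ≥0∞)

/-- `R(s,τ) = ℳY''(s+τ) + |Y''(s+τ)|`, here as a function of the point `x = s+τ`. -/
def Rfn (g : ℝ → E2) (x : ℝ) : ℝ≥0∞ := maxFn g x + (‖g x‖₊ : ℝ≥0∞)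

/-- The `L^∞(𝕋)` norm. -/
def normLinf (g : ℝ → E2) : ℝ := ⨆ s : ℝ, ‖g s‖

lemma perp_apply_zero (v : E2) : perp v 0 = -(v 1) := rfl
lemma perp_apply_one (v : E2) : perp v 1 = v 0 := rfl

lemma inner_perp_self (v : E2) : ⟪v, perp v⟫ = 0 := by
  simp [PiLp.inner_apply, Fin.sum_univ_two, perp_apply_zero, perp_apply_one]
  ring

lemma norm_perp (v : E2) : ‖perp v‖ = ‖v‖ := by
  simp [EuclideanSpace.norm_eq, Fin.sum_univ_two, perp_apply_zero, perp_apply_one]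
  ring_nf

lemma perp_add (a b : E2) : perp (a + b) = perp a + perp b := by
  ext i
  fin_cases i <;>
    simp [perp_apply_zero, perp_apply_one, PiLp.add_apply] <;> ring

lemma perp_smul (c : ℝ) (a : E2) : perp (c • a) = c • perp a := by
  ext i
  fin_cases i <;>
    simp [perp_apply_zero, perp_apply_one, PiLp.smul_apply] <;> ring

lemma perp_zero : perp (0 : E2) = 0 := by
  ext i
  fin_cases i <;> simp [perp_apply_zero, perp_apply_one]

/-- The improved estimate `|B(s,s+τ)| ≤ C τ² Q R` for
`B(s,s+τ) = Y′(s+τ)·(Y(s+τ) − Y(s))^⊥`. -/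
theorem statement3 :
    ∃ C : ℝ, 0 < C ∧
      ∀ (Y Y' Y'' : ℝ → E2),
        Function.Periodic Y (2 * π) →
        (∀ s, HasDerivAt Y (Y' s) s) →
        Continuous Y' →
        LocallyIntegrable Y'' volume →
        (∀ a b : ℝ, a ≤ b → Y' b - Y' a = ∫ u in a..b, Y'' u) →
        ∀ (s τ : ℝ), |τ| ≤ π →
          ENNReal.ofReal |⟪Y' (s + τ), perp (Y (s + τ) - Y s)⟫|
            ≤ ENNReal.ofReal (C * τ ^ 2 * normLinf Y') * Rfn Y'' (s + τ) := by
  refine ⟨2, two_pos, ?_⟩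
  intro Y Y' Y'' hper hderiv hcont hloc hFTC s τ _
  set x := s + τ with hx
  rcases eq_or_ne τ 0 with h0 | h0
  · have : Y x - Y s = 0 := by rw [hx, h0, add_zero, sub_self]
    rw [this, perp_zero, inner_zero_right, abs_zero, ENNReal.ofReal_zero]
    exact zero_le
  set r := |τ| with hr
  have hrpos : 0 < r := abs_pos.2 h0
  set Q := normLinf Y' with hQ
  -- Y' is periodic
  have hY'per : Function.Periodic Y' (2 * π) := by
    intro t
    have h1 : HasDerivAt (fun u => Y (u + 2 * π)) (Y' (t + 2 * π)) t :=
      (hderiv (t + 2 * π)).comp_add_const t (2 * π)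
    have h2 : (fun u => Y (u + 2 * π)) = Y := funext fun u => hper u
    rw [h2] at h1
    exact h1.unique (hderiv t)
  have hQb : BddAbove (Set.range fun t => ‖Y' t‖) := by
    have himg := (hY'per.comp fun v => ‖v‖).image_Icc (by positivity : (0:ℝ) < 2 * π) 0
    rw [Function.comp_def] at himg
    rw [← himg]
    exact (isCompact_Icc.image (continuous_norm.comp hcont)).bddAbove
  have hQle : ∀ t, ‖Y' t‖ ≤ Q := fun t => le_ciSup hQb t
  have hQ0 : 0 ≤ Q := le_trans (norm_nonneg _) (hQle 0)
  -- integrability of Y'' near x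
  have hInt : IntegrableOn Y'' (Set.Ioc (x - r) (x + r)) :=
    (hloc.integrableOn_isCompact isCompact_Icc).mono_set Set.Ioc_subset_Icc_self
  set J := ∫ u in Set.Ioc (x - r) (x + r), ‖Y'' u‖ with hJdef
  have hJ0 : 0 ≤ J := setIntegral_nonneg measurableSet_Ioc fun u _ => norm_nonneg _
  -- key pointwise bound
  have key : ∀ u ∈ Set.uIcc s x, ‖Y' u - Y' x‖ ≤ J := by
    intro u hu
    have hτ1 : -r ≤ τ := neg_abs_le τ
    have hτ2 : τ ≤ r := le_abs_self τ
    have h1 : x - r ≤ u := by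
      rcases Set.mem_uIcc.1 hu with ⟨h, _⟩ | ⟨h, _⟩ <;> [skip; skip] <;>
        simp only [hx] at * <;> linarith
    have h2 : u ≤ x + r := by
      rcases Set.mem_uIcc.1 hu with ⟨_, h⟩ | ⟨_, h⟩ <;> simp only [hx] at * <;> linarith
    have hsub : Set.Ioc (min u x) (max u x) ⊆ Set.Ioc (x - r) (x + r) := by
      apply Set.Ioc_subset_Ioc
      · exact le_min h1 (by linarith)
      · exact max_le h2 (by linarith)
    have hmono : (∫ v in Set.Ioc (min u x) (max u x), ‖Y'' v‖) ≤ J :=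
      setIntegral_mono_set hInt.norm
        (Filter.Eventually.of_forall fun v => norm_nonneg _)
        (HasSubset.Subset.eventuallyLE hsub)
    rcases le_total u x with hle | hle
    · calc ‖Y' u - Y' x‖ = ‖∫ v in Set.Ioc u x, Y'' v‖ := by
            rw [norm_sub_rev, hFTC u x hle, intervalIntegral.integral_of_le hle]
        _ ≤ ∫ v in Set.Ioc u x, ‖Y'' v‖ := norm_integral_le_integral_norm _
        _ ≤ J := by rwa [min_eq_left hle, max_eq_right hle] at hmono
    · calc ‖Y' u - Y' x‖ = ‖∫ v in Set.Ioc x u, Y'' v‖ := by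
            rw [hFTC x u hle, intervalIntegral.integral_of_le hle]
        _ ≤ ∫ v in Set.Ioc x u, ‖Y'' v‖ := norm_integral_le_integral_norm _
        _ ≤ J := by rwa [min_eq_right hle, max_eq_left hle] at hmono
  -- rewrite B
  have hYint : Y x - Y s = ∫ u in s..x, Y' u :=
    (intervalIntegral.integral_eq_sub_of_hasDerivAt (fun u _ => hderiv u)
      (hcont.intervalIntegrable s x)).symm
  have hsplit : (∫ u in s..x, Y' u) = (∫ u in s..x, (Y' u - Y' x)) + (x - s) • Y' x := by
    rw [intervalIntegral.integral_sub (hcont.intervalIntegrable s x)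
      intervalIntegrable_const, intervalIntegral.integral_const]
    abel
  have hB : ⟪Y' x, perp (Y x - Y s)⟫ = ⟪Y' x, perp (∫ u in s..x, (Y' u - Y' x))⟫ := by
    rw [hYint, hsplit, perp_add, perp_smul, inner_add_right, real_inner_smul_right,
      inner_perp_self, mul_zero, add_zero]
  have hnormI : ‖∫ u in s..x, (Y' u - Y' x)‖ ≤ J * r := by
    have := intervalIntegral.norm_integral_le_of_norm_le_const
      (C := J) (f := fun u => Y' u - Y' x) (a := s) (b := x)
      (fun u hu => key u (Set.uIoc_subset_uIcc hu))
    have hxs : |x - s| = r := by rw [hx]; simp [hr]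
    rwa [hxs] at this
  have habs : |⟪Y' x, perp (Y x - Y s)⟫| ≤ Q * (J * r) := by
    rw [hB]
    calc |⟪Y' x, perp (∫ u in s..x, (Y' u - Y' x))⟫|
        ≤ ‖Y' x‖ * ‖perp (∫ u in s..x, (Y' u - Y' x))‖ := abs_real_inner_le_norm _ _
      _ = ‖Y' x‖ * ‖∫ u in s..x, (Y' u - Y' x)‖ := by rw [norm_perp]
      _ ≤ Q * (J * r) := mul_le_mul (hQle x) hnormI (norm_nonneg _) hQ0
  -- ENNReal side
  have hmax : ENNReal.ofReal J ≤ ENNReal.ofReal (2 * r) * maxFn Y'' x := by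
    have hJ : ENNReal.ofReal J = ∫⁻ u in Set.Ioc (x - r) (x + r), (‖Y'' u‖₊ : ℝ≥0∞) :=
      ofReal_integral_norm_eq_lintegral_enorm hInt
    have hle : (ENNReal.ofReal (2 * r))⁻¹ *
        (∫⁻ u in Set.Ioc (x - r) (x + r), (‖Y'' u‖₊ : ℝ≥0∞)) ≤ maxFn Y'' x :=
      le_iSup₂ (f := fun (ρ : ℝ) (_ : 0 < ρ) =>
        (ENNReal.ofReal (2 * ρ))⁻¹ * ∫⁻ y in Set.Ioc (x - ρ) (x + ρ), (‖Y'' y‖₊ : ℝ≥0∞))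
        r hrpos
    have hne : ENNReal.ofReal (2 * r) ≠ 0 := by
      simp [ENNReal.ofReal_eq_zero]; linarith
    calc ENNReal.ofReal J
        = ENNReal.ofReal (2 * r) * ((ENNReal.ofReal (2 * r))⁻¹ *
            ∫⁻ u in Set.Ioc (x - r) (x + r), (‖Y'' u‖₊ : ℝ≥0∞)) := by
          rw [← mul_assoc, ENNReal.mul_inv_cancel hne ENNReal.ofReal_ne_top, one_mul, hJ]
      _ ≤ ENNReal.ofReal (2 * r) * maxFn Y'' x := mul_le_mul_right hle _
  calc ENNReal.ofReal |⟪Y' x, perp (Y x - Y s)⟫|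
      ≤ ENNReal.ofReal (Q * r * J) := by
        apply ENNReal.ofReal_le_ofReal; linarith [habs]
    _ = ENNReal.ofReal (Q * r) * ENNReal.ofReal J := by
        rw [← ENNReal.ofReal_mul (by positivity)]
    _ ≤ ENNReal.ofReal (Q * r) * (ENNReal.ofReal (2 * r) * maxFn Y'' x) :=
        mul_le_mul_right hmax _
    _ = ENNReal.ofReal (2 * τ ^ 2 * Q) * maxFn Y'' x := by
        rw [← mul_assoc, ← ENNReal.ofReal_mul (by positivity)]
        congr 2
        have : r ^ 2 = τ ^ 2 := sq_abs τ
        nlinarith [this]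
    _ ≤ ENNReal.ofReal (2 * τ ^ 2 * Q) * Rfn Y'' x :=
        mul_le_mul_right (self_le_add_right _ _) _
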